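/- Let T be a valid cut of S and let B be a tight mincut for T. If A is any S-mincut that divides B (i.e., A ∩ B ≠ ∅ and B \ A ≠ ∅), then A divides T as well (i.e., A ∩ T ≠ ∅ and T \ A ≠ ∅). -/
import Mathlib


open Finset

/-- Capacity of the cut defined by `A`: number of edges with one endpoint in `A`
and the other outside `A`. -/
def cap {V : Type*} [Fintype V] [DecidableEq V] (w : V → V → ℕ) (A : Finset V) : ℕ :=
  ∑ a ∈ A, ∑ b ∈ Aᶜ, w a b

/-- A cut of `V` is a subset `A` with `∅ ≠ A ≠ V`. -/
def IsCut {V : Type*} [Fintype V] (A : Finset V) : Prop :=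
  A ≠ ∅ ∧ A ≠ Finset.univ

/-- An `S`-cut is a cut that divides `S`. -/
def IsSCut {V : Type*} [Fintype V] [DecidableEq V] (S A : Finset V) : Prop :=
  IsCut A ∧ (A ∩ S).Nonempty ∧ (S \ A).Nonempty

/-- An `S`-mincut is an `S`-cut of minimum capacity among all `S`-cuts. -/
def IsSMincut {V : Type*} [Fintype V] [DecidableEq V] (w : V → V → ℕ) (S A : Finset V) : Prop :=
  IsSCut S A ∧ ∀ B : Finset V, IsSCut S B → cap w A ≤ cap w B

/-- `T ⊆ S` is a valid cut of `S` if some `S`-mincut `A` satisfies `A ∩ S = T`. -/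
def IsValidCut {V : Type*} [Fintype V] [DecidableEq V] (w : V → V → ℕ) (S T : Finset V) : Prop :=
  ∃ A : Finset V, IsSMincut w S A ∧ A ∩ S = T

/-- A tight mincut for a valid cut `T` of `S`. -/
def IsTightMincut {V : Type*} [Fintype V] [DecidableEq V] (w : V → V → ℕ)
    (S T N : Finset V) : Prop :=
  IsSMincut w S N ∧ N ∩ S = T ∧ ∀ A : Finset V, IsSMincut w S A → A ∩ S = T → N ⊆ A

/-- A loose mincut for a valid cut `T` of `S`. -/
def IsLooseMincut {V : Type*} [Fintype V] [DecidableEq V] (w : V → V → ℕ)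
    (S T F : Finset V) : Prop :=
  IsSMincut w S F ∧ F ∩ S = T ∧ ∀ A : Finset V, IsSMincut w S A → A ∩ S = T → A ⊆ F

lemma cap_eq' {V : Type*} [Fintype V] [DecidableEq V] (w : V → V → ℕ) (A : Finset V) :
    cap w A = ∑ a : V, ∑ b : V, (if a ∈ A ∧ b ∉ A then w a b else 0) := by
  unfold cap
  have h1 : ∀ a : V, (∑ b : V, if a ∈ A ∧ b ∉ A then w a b else 0)
      = if a ∈ A then ∑ b ∈ Aᶜ, w a b else 0 := by
    intro a
    by_cases h : a ∈ A
    · simp only [h, true_and, if_true]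
      have : ∀ b : V, (if b ∉ A then w a b else 0) = if b ∈ Aᶜ then w a b else 0 := by
        intro b; simp [Finset.mem_compl]
      rw [Finset.sum_congr rfl fun b _ => this b, Finset.sum_ite_mem, Finset.univ_inter]
    · simp [h]
  rw [Finset.sum_congr rfl fun a _ => h1 a, Finset.sum_ite_mem, Finset.univ_inter]

lemma cap_submodular {V : Type*} [Fintype V] [DecidableEq V] (w : V → V → ℕ) (A B : Finset V) :
    cap w (A ∩ B) + cap w (A ∪ B) ≤ cap w A + cap w B := by
  simp only [cap_eq', ← Finset.sum_add_distrib]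
  apply Finset.sum_le_sum; intro a _
  apply Finset.sum_le_sum; intro b _
  by_cases h1 : a ∈ A <;> by_cases h2 : a ∈ B <;> by_cases h3 : b ∈ A <;> by_cases h4 : b ∈ B <;>
    simp [h1, h2, h3, h4]

lemma cap_compl {V : Type*} [Fintype V] [DecidableEq V] (w : V → V → ℕ)
    (hsymm : ∀ u v : V, w u v = w v u) (A : Finset V) : cap w Aᶜ = cap w A := by
  unfold cap
  rw [compl_compl, Finset.sum_comm]
  exact Finset.sum_congr rfl fun a _ => Finset.sum_congr rfl fun b _ => hsymm b a

lemma cap_posimodular {V : Type*} [Fintype V] [DecidableEq V] (w : V → V → ℕ)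
    (hsymm : ∀ u v : V, w u v = w v u) (A B : Finset V) :
    cap w (A \ B) + cap w (B \ A) ≤ cap w A + cap w B := by
  have h := cap_submodular w A Bᶜ
  rw [cap_compl w hsymm B] at h
  have e1 : A ∩ Bᶜ = A \ B := by ext x; simp [Finset.mem_sdiff]
  have e2 : A ∪ Bᶜ = (B \ A)ᶜ := by ext x; simp [Finset.mem_sdiff]; tauto
  rw [e1, e2, cap_compl w hsymm] at h
  exact h

/-- If `B` is the tight mincut for a valid cut `T` of `S` and `A` is any `S`-mincut
that divides `B`, then `A` divides `T` as well. -/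
theorem smincut_dividing_tight_divides_steiner_side {V : Type*} [Fintype V] [DecidableEq V]
    (w : V → V → ℕ) (hsymm : ∀ u v : V, w u v = w v u) (hloop : ∀ v : V, w v v = 0)
    (S : Finset V) (hS : 2 ≤ S.card)
    (T : Finset V) (hT : IsValidCut w S T)
    (B : Finset V) (hB : IsTightMincut w S T B)
    (A : Finset V) (hA : IsSMincut w S A)
    (hdiv : (A ∩ B).Nonempty ∧ (B \ A).Nonempty) :
    (A ∩ T).Nonempty ∧ (T \ A).Nonempty := by
  obtain ⟨hBmin, hBT, hBtight⟩ := hB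
  obtain ⟨⟨⟨hAne, hAnu⟩, hAS, hSA⟩, hAopt⟩ := hA
  obtain ⟨⟨⟨hBne, hBnu⟩, hBS, hSB⟩, hBopt⟩ := hBmin
  have hAcut : IsSCut S A := ⟨⟨hAne, hAnu⟩, hAS, hSA⟩
  have hBcut : IsSCut S B := ⟨⟨hBne, hBnu⟩, hBS, hSB⟩
  have hTne : T.Nonempty := by rw [← hBT]; exact hBS
  have hcapAB : cap w A = cap w B :=
    le_antisymm (hAopt B hBcut) (hBopt A hAcut)
  constructor
  · -- A ∩ T nonempty
    by_contra h
    rw [Finset.not_nonempty_iff_eq_empty] at h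
    have hTA : T \ A = T := by
      ext x; simp only [Finset.mem_sdiff]
      refine ⟨fun hx => hx.1, fun hx => ⟨hx, fun hxA => ?_⟩⟩
      have : x ∈ A ∩ T := Finset.mem_inter.mpr ⟨hxA, hx⟩
      simp [h] at this
    have hCS : (B \ A) ∩ S = T := by
      ext x
      simp only [Finset.mem_inter, Finset.mem_sdiff, ← hBT]
      constructor
      · rintro ⟨⟨h1, _⟩, h2⟩; exact ⟨h1, h2⟩
      · rintro ⟨h1, h2⟩
        refine ⟨⟨h1, fun hxA => ?_⟩, h2⟩
        have : x ∈ A ∩ T := Finset.mem_inter.mpr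
          ⟨hxA, by rw [← hBT]; exact Finset.mem_inter.mpr ⟨h1, h2⟩⟩
        simp [h] at this
    obtain ⟨s, hs⟩ := hSB
    have hsC : s ∉ B \ A := fun hc => (Finset.mem_sdiff.mp hs).2 (Finset.mem_sdiff.mp hc).1
    have hCcut : IsSCut S (B \ A) := by
      refine ⟨⟨Finset.nonempty_iff_ne_empty.mp hdiv.2,
        fun hc => hsC (hc ▸ Finset.mem_univ s)⟩, ?_, ?_⟩
      · rw [hCS]; exact hTne
      · exact ⟨s, Finset.mem_sdiff.mpr ⟨(Finset.mem_sdiff.mp hs).1, hsC⟩⟩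
    have hsub : A ∩ S ⊆ A \ B := by
      intro x hx
      rw [Finset.mem_inter] at hx
      refine Finset.mem_sdiff.mpr ⟨hx.1, fun hxB => ?_⟩
      have : x ∈ A ∩ T := Finset.mem_inter.mpr
        ⟨hx.1, by rw [← hBT]; exact Finset.mem_inter.mpr ⟨hxB, hx.2⟩⟩
      simp [h] at this
    have hDcut : IsSCut S (A \ B) := by
      obtain ⟨t, ht⟩ := hSA
      have htD : t ∉ A \ B := fun hc => (Finset.mem_sdiff.mp ht).2 (Finset.mem_sdiff.mp hc).1
      refine ⟨⟨Finset.nonempty_iff_ne_empty.mp (hAS.mono hsub),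
        fun hc => htD (hc ▸ Finset.mem_univ t)⟩, ?_, ?_⟩
      · exact hAS.mono fun x hx =>
          Finset.mem_inter.mpr ⟨hsub hx, (Finset.mem_inter.mp hx).2⟩
      · exact ⟨t, Finset.mem_sdiff.mpr ⟨(Finset.mem_sdiff.mp ht).1, htD⟩⟩
    have hposi := cap_posimodular w hsymm A B
    have h1 := hAopt (A \ B) hDcut
    have h2 := hAopt (B \ A) hCcut
    have hCeq : cap w (B \ A) = cap w A := by omega
    have hCmin : IsSMincut w S (B \ A) :=
      ⟨hCcut, fun X hX => hCeq ▸ hAopt X hX⟩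
    have hBsub : B ⊆ B \ A := hBtight (B \ A) hCmin hCS
    obtain ⟨x, hx⟩ := hdiv.1
    rw [Finset.mem_inter] at hx
    exact (Finset.mem_sdiff.mp (hBsub hx.2)).2 hx.1
  · -- T \ A nonempty
    by_contra h
    rw [Finset.not_nonempty_iff_eq_empty, Finset.sdiff_eq_empty_iff_subset] at h
    have hCS : (A ∩ B) ∩ S = T := by
      ext x
      simp only [Finset.mem_inter, ← hBT]
      constructor
      · rintro ⟨⟨_, h1⟩, h2⟩; exact ⟨h1, h2⟩
      · rintro ⟨h1, h2⟩
        exact ⟨⟨h (by rw [← hBT]; exact Finset.mem_inter.mpr ⟨h1, h2⟩), h1⟩, h2⟩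
    obtain ⟨s, hs⟩ := hSB
    have hsC : s ∉ A ∩ B := fun hc => (Finset.mem_sdiff.mp hs).2 (Finset.mem_inter.mp hc).2
    have hCcut : IsSCut S (A ∩ B) := by
      refine ⟨⟨Finset.nonempty_iff_ne_empty.mp hdiv.1,
        fun hc => hsC (hc ▸ Finset.mem_univ s)⟩, ?_, ?_⟩
      · rw [hCS]; exact hTne
      · exact ⟨s, Finset.mem_sdiff.mpr ⟨(Finset.mem_sdiff.mp hs).1, hsC⟩⟩
    have hDcut : IsSCut S (A ∪ B) := by
      obtain ⟨t, ht⟩ := hSA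
      rw [Finset.mem_sdiff] at ht
      have htD : t ∉ A ∪ B := by
        rw [Finset.mem_union]
        rintro (hc | hc)
        · exact ht.2 hc
        · exact ht.2 (h (by rw [← hBT]; exact Finset.mem_inter.mpr ⟨hc, ht.1⟩))
      refine ⟨⟨?_, fun hc => htD (hc ▸ Finset.mem_univ t)⟩, ?_, ?_⟩
      · intro hc
        obtain ⟨x, hx⟩ := hAS
        have : x ∈ A ∪ B := Finset.mem_union_left _ (Finset.mem_inter.mp hx).1
        simp [hc] at this
      · exact hAS.mono fun x hx => Finset.mem_inter.mpr
          ⟨Finset.mem_union_left _ (Finset.mem_inter.mp hx).1, (Finset.mem_inter.mp hx).2⟩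
      · exact ⟨t, Finset.mem_sdiff.mpr ⟨ht.1, htD⟩⟩
    have hsubm := cap_submodular w A B
    have h1 := hAopt (A ∩ B) hCcut
    have h2 := hAopt (A ∪ B) hDcut
    have hCeq : cap w (A ∩ B) = cap w A := by omega
    have hCmin : IsSMincut w S (A ∩ B) :=
      ⟨hCcut, fun X hX => hCeq ▸ hAopt X hX⟩
    have hBsub : B ⊆ A ∩ B := hBtight (A ∩ B) hCmin hCS
    obtain ⟨x, hx⟩ := hdiv.2
    rw [Finset.mem_sdiff] at hx
    exact hx.2 (Finset.mem_inter.mp (hBsub hx.1)).1
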